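/- Let K ⊆ L ⊆ R^n be convex bodies in John's position with contact pairs (u_i, v_i)_{i=1}^m, and let x ∈ ∂L ∩ (-n·∂K). Let w ∈ ∂K° satisfy ⟨x, w⟩ = -n, and set A = {i : ⟨u_i, w⟩ < 1}, B = {i : ⟨u_i, w⟩ = 1}. Then -x/n ∈ conv{u_i : i ∈ B}, -w/n ∈ conv{v_i : i ∈ A}, and ⟨x, v_i⟩ = 1 for all i ∈ A. -/

import Mathlib

open Pointwise

noncomputable section

/-- Euclidean space ℝⁿ. -/
abbrev E (n : ℕ) := EuclideanSpace ℝ (Fin n)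

/-- A convex body: compact, convex, with nonempty interior. -/
def IsConvexBody {n : ℕ} (K : Set (E n)) : Prop :=
  IsCompact K ∧ Convex ℝ K ∧ (interior K).Nonempty

/-- The polar body `K° = {x : ⟨x, y⟩ ≤ 1 for all y ∈ K}`. -/
def polarBody {n : ℕ} (K : Set (E n)) : Set (E n) :=
  {x | ∀ y ∈ K, (inner ℝ x y : ℝ) ≤ 1}

/-- The Banach-Mazur distance:
`inf {r > 0 : K + u ⊆ T(L + v) ⊆ r(K + u)}` over invertible linear `T` and
translations `u, v`. -/
def bmDist {n : ℕ} (K L : Set (E n)) : ℝ :=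
  sInf {r : ℝ | 0 < r ∧ ∃ (T : E n ≃ₗ[ℝ] E n) (u v : E n),
    (u +ᵥ K) ⊆ (T : E n →ₗ[ℝ] E n) '' (v +ᵥ L) ∧
    (T : E n →ₗ[ℝ] E n) '' (v +ᵥ L) ⊆ r • (u +ᵥ K)}

/-- The Grünbaum distance: `inf |r|` over nondegenerate affine images
`K'` of `K` and `L'` of `L` with `K' ⊆ L' ⊆ r • K'` (`r` possibly negative). -/
def grDist {n : ℕ} (K L : Set (E n)) : ℝ :=
  sInf {s : ℝ | ∃ (r : ℝ) (F G : E n ≃ᵃ[ℝ] E n), s = |r| ∧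
    (F : E n → E n) '' K ⊆ (G : E n → E n) '' L ∧
    (G : E n → E n) '' L ⊆ r • ((F : E n → E n) '' K)}

/-- The conditions of John's decomposition for given contact pairs
`(u i, v i)` and weights `a i`. -/
def IsJohnData {n : ℕ} (K L : Set (E n)) {m : ℕ}
    (u v : Fin m → E n) (a : Fin m → ℝ) : Prop :=
  (∀ i, u i ∈ frontier K ∩ frontier L) ∧
  (∀ i, v i ∈ frontier (polarBody K) ∩ frontier (polarBody L)) ∧
  (∀ i, 0 < a i) ∧
  (∀ x : E n, x = ∑ i, (a i * (inner ℝ x (v i) : ℝ)) • u i) ∧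
  (∑ i, a i • u i = 0) ∧
  (∑ i, a i • v i = 0) ∧
  (∀ i, (inner ℝ (u i) (v i) : ℝ) = 1)

/-- `K ⊆ L` are in John's position. -/
def IsJohnPosition {n : ℕ} (K L : Set (E n)) : Prop :=
  K ⊆ L ∧ ∃ (m : ℕ), 0 < m ∧ ∃ (u v : Fin m → E n) (a : Fin m → ℝ),
    IsJohnData K L u v a

/-- A triangle in the plane: the convex hull of three affinely
independent points. -/
def IsTriangle (K : Set (E 2)) : Prop :=
  ∃ p : Fin 3 → E 2, AffineIndependent ℝ p ∧ K = convexHull ℝ (Set.range p)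

/-- A centrally symmetric set, with center `c`. -/
def IsCentrallySymmetric {n : ℕ} (L : Set (E n)) : Prop :=
  ∃ c : E n, ∀ x, x ∈ L ↔ (2 : ℝ) • c - x ∈ L


/-!
Read as `id = ∑ aᵢ uᵢ ⊗ vᵢ`, John's decomposition gives `∑ aᵢ = n` (take traces, using
`⟨uᵢ, vᵢ⟩ = 1`) and `⟨x, w⟩ = ∑ aᵢ ⟨x, vᵢ⟩ ⟨uᵢ, w⟩`. Together with `∑ aᵢ uᵢ = ∑ aᵢ vᵢ = 0` this yields
`∑ aᵢ (1 - ⟨x, vᵢ⟩)(1 - ⟨uᵢ, w⟩) = n + ⟨x, w⟩ = 0`. Both factors are nonnegative by polarity, so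
every term vanishes: `⟨x, vᵢ⟩ = 1` whenever `⟨uᵢ, w⟩ < 1`. The same identities show that the weights
`aᵢ (1 - ⟨x, vᵢ⟩) / n` (supported on `B`) and `aᵢ (1 - ⟨uᵢ, w⟩) / n` (supported on `A`) are convex
combinations representing `-x/n` by the `uᵢ` and `-w/n` by the `vᵢ`.
-/

open Module

local notation "⟪" a ", " b "⟫" => @inner ℝ _ _ a b

theorem nontrivial_of_mem_frontier {X : Type*} [TopologicalSpace X] {s : Set X} {x : X}
    (hx : x ∈ frontier s) : Nontrivial X := by
  by_contra h
  rw [not_nontrivial_iff_subsingleton] at h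
  simp at hx

theorem Finset.univ_centerMass_mem_convexHull_image {ι F : Type*} [Fintype ι] [AddCommGroup F]
    [Module ℝ F] {w : ι → ℝ} {z : ι → F} {S : Set ι} (hw₀ : ∀ i, 0 ≤ w i)
    (hws : 0 < ∑ i, w i) (hS : ∀ i ∉ S, w i = 0) :
    Finset.univ.centerMass w z ∈ convexHull ℝ (z '' S) := by
  classical
  rw [← Finset.centerMass_filter_ne_zero]
  refine Finset.centerMass_mem_convexHull _ (fun i _ ↦ hw₀ i) ?_ fun i hi ↦ ?_
  · rwa [Finset.sum_filter_ne_zero]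
  · exact Set.mem_image_of_mem z (not_imp_comm.mp (hS i) (Finset.mem_filter.mp hi).2)

theorem isClosed_polarBody {n : ℕ} (K : Set (E n)) : IsClosed (polarBody K) := by
  simp only [polarBody, Set.ofPred_forall]
  exact isClosed_biInter fun y _ ↦ isClosed_le (continuous_id.inner continuous_const) continuous_const

theorem inner_le_one_of_mem_polarBody_of_mem_closure {n : ℕ} {K : Set (E n)} {z y : E n}
    (hz : z ∈ polarBody K) (hy : y ∈ closure K) : ⟪z, y⟫ ≤ 1 :=
  closure_minimal (t := {y' | ⟪z, y'⟫ ≤ 1}) hz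
    (isClosed_le (continuous_const.inner continuous_id) continuous_const) hy

section JohnDecomposition

variable {F ι : Type*} [NormedAddCommGroup F] [InnerProductSpace ℝ F] [Fintype ι]
  {u v : ι → F} {a : ι → ℝ}

theorem inner_eq_sum_of_decomposition (hdec : ∀ x : F, x = ∑ i, (a i * ⟪x, v i⟫) • u i)
    (x y : F) : ⟪x, y⟫ = ∑ i, a i * ⟪x, v i⟫ * ⟪u i, y⟫ := by
  conv_lhs => rw [hdec x]
  simp only [sum_inner, real_inner_smul_left]

theorem decomposition_swap (hdec : ∀ x : F, x = ∑ i, (a i * ⟪x, v i⟫) • u i) (y : F) :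
    y = ∑ i, (a i * ⟪y, u i⟫) • v i := by
  refine ext_inner_left ℝ fun z ↦ ?_
  rw [inner_eq_sum_of_decomposition hdec, inner_sum]
  refine Finset.sum_congr rfl fun i _ ↦ ?_
  rw [real_inner_smul_right, real_inner_comm y]
  ring

theorem sum_mul_inner_eq_finrank [FiniteDimensional ℝ F]
    (hdec : ∀ x : F, x = ∑ i, (a i * ⟪x, v i⟫) • u i) :
    ∑ i, a i * ⟪u i, v i⟫ = finrank ℝ F := by
  let b := stdOrthonormalBasis ℝ F
  calc ∑ i, a i * ⟪u i, v i⟫ = ∑ i, a i * ∑ j, ⟪u i, b j⟫ * ⟪b j, v i⟫ := by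
        simp only [b.sum_inner_mul_inner]
    _ = ∑ j, ⟪b j, b j⟫ := by
        simp only [Finset.mul_sum]
        rw [Finset.sum_comm]
        refine Finset.sum_congr rfl fun j _ ↦ ?_
        rw [inner_eq_sum_of_decomposition hdec (b j)]
        exact Finset.sum_congr rfl fun i _ ↦ by ring
    _ = finrank ℝ F := by simp [b.orthonormal.1]

theorem sum_mul_one_sub_inner (hsv : ∑ i, a i • v i = 0) (x : F) :
    ∑ i, a i * (1 - ⟪x, v i⟫) = ∑ i, a i := by
  have : ∑ i, a i * ⟪x, v i⟫ = 0 := by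
    simpa only [inner_sum, real_inner_smul_right, inner_zero_right] using congr_arg (⟪x, ·⟫) hsv
  simp only [mul_sub, mul_one, Finset.sum_sub_distrib, this, sub_zero]

theorem sum_mul_one_sub_inner_smul (hdec : ∀ x : F, x = ∑ i, (a i * ⟪x, v i⟫) • u i)
    (hsu : ∑ i, a i • u i = 0) (x : F) :
    ∑ i, (a i * (1 - ⟪x, v i⟫)) • u i = -x := by
  simp only [mul_sub, mul_one, sub_smul, Finset.sum_sub_distrib, hsu, ← hdec x, zero_sub]

theorem sum_mul_one_sub_inner_mul_one_sub_inner [FiniteDimensional ℝ F]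
    (hdec : ∀ x : F, x = ∑ i, (a i * ⟪x, v i⟫) • u i) (hsu : ∑ i, a i • u i = 0)
    (hsv : ∑ i, a i • v i = 0) (huv : ∀ i, ⟪u i, v i⟫ = 1) (x y : F) :
    ∑ i, a i * (1 - ⟪x, v i⟫) * (1 - ⟪u i, y⟫) = finrank ℝ F + ⟪x, y⟫ := by
  have htrace : ∑ i, a i = finrank ℝ F := by
    simpa only [huv, mul_one] using sum_mul_inner_eq_finrank hdec
  have hu : ∑ i, a i * (1 - ⟪x, v i⟫) * ⟪u i, y⟫ = -⟪x, y⟫ := by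
    simpa only [sum_inner, real_inner_smul_left, inner_neg_left] using
      congr_arg (⟪·, y⟫) (sum_mul_one_sub_inner_smul hdec hsu x)
  simp only [mul_sub (a _ * _), mul_one, Finset.sum_sub_distrib, hu, sum_mul_one_sub_inner hsv,
    htrace, sub_neg_eq_add]

theorem inner_eq_one_of_inner_lt_one [FiniteDimensional ℝ F]
    (hdec : ∀ x : F, x = ∑ i, (a i * ⟪x, v i⟫) • u i) (hsu : ∑ i, a i • u i = 0)
    (hsv : ∑ i, a i • v i = 0) (huv : ∀ i, ⟪u i, v i⟫ = 1) (ha : ∀ i, 0 < a i) {x y : F}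
    (hxy : ⟪x, y⟫ = -finrank ℝ F) (hx : ∀ i, ⟪x, v i⟫ ≤ 1) (hy : ∀ i, ⟪u i, y⟫ ≤ 1) {i : ι}
    (hi : ⟪u i, y⟫ < 1) : ⟪x, v i⟫ = 1 := by
  have hnonneg : ∀ j ∈ Finset.univ, 0 ≤ a j * (1 - ⟪x, v j⟫) * (1 - ⟪u j, y⟫) := fun j _ ↦
    mul_nonneg (mul_nonneg (ha j).le (sub_nonneg.mpr (hx j))) (sub_nonneg.mpr (hy j))
  have hsum := sum_mul_one_sub_inner_mul_one_sub_inner hdec hsu hsv huv x y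
  rw [hxy, add_neg_cancel, Finset.sum_eq_zero_iff_of_nonneg hnonneg] at hsum
  have := hsum i (Finset.mem_univ i)
  simp only [mul_eq_zero, (ha i).ne', false_or, sub_eq_zero] at this
  exact (this.resolve_right hi.ne').symm

theorem neg_inv_finrank_smul_mem_convexHull [FiniteDimensional ℝ F] [Nontrivial F]
    (hdec : ∀ x : F, x = ∑ i, (a i * ⟪x, v i⟫) • u i) (hsu : ∑ i, a i • u i = 0)
    (hsv : ∑ i, a i • v i = 0) (huv : ∀ i, ⟪u i, v i⟫ = 1) (ha : ∀ i, 0 < a i) {x : F}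
    (hx : ∀ i, ⟪x, v i⟫ ≤ 1) {S : Set ι} (hS : ∀ i ∉ S, ⟪x, v i⟫ = 1) :
    (-(1 / (finrank ℝ F : ℝ))) • x ∈ convexHull ℝ (u '' S) := by
  have hweights : ∑ i, a i * (1 - ⟪x, v i⟫) = finrank ℝ F := by
    rw [sum_mul_one_sub_inner hsv, ← sum_mul_inner_eq_finrank hdec]
    simp only [huv, mul_one]
  have hmem := Finset.univ_centerMass_mem_convexHull_image (z := u) (S := S)
    (fun i ↦ mul_nonneg (ha i).le (sub_nonneg.mpr (hx i)))
    (hweights ▸ Nat.cast_pos.mpr finrank_pos) fun i hi ↦ by rw [hS i hi, sub_self, mul_zero]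
  rwa [Finset.centerMass, hweights, sum_mul_one_sub_inner_smul hdec hsu, smul_neg, ← neg_smul,
    ← one_div] at hmem

end JohnDecomposition

theorem stmt8_general (n m : ℕ) (K L : Set (E n))
    (u v : Fin m → E n) (a : Fin m → ℝ) (hJ : IsJohnData K L u v a)
    (x : E n) (hx : x ∈ frontier L ∩ ((-(n : ℝ)) • frontier K))
    (w : E n) (hw : w ∈ frontier (polarBody K))
    (hxw : (inner ℝ x w : ℝ) = -(n : ℝ))
    (A B : Set (Fin m))
    (hA : A = {i | (inner ℝ (u i) w : ℝ) < 1})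
    (hB : B = {i | (inner ℝ (u i) w : ℝ) = 1}) :
    (-(1 / (n : ℝ))) • x ∈ convexHull ℝ (u '' B) ∧
    (-(1 / (n : ℝ))) • w ∈ convexHull ℝ (v '' A) ∧
    (∀ i ∈ A, (inner ℝ x (v i) : ℝ) = 1) := by
  obtain ⟨hu, hv, ha, hdec, hsu, hsv, huv⟩ := hJ
  have := nontrivial_of_mem_frontier hx.1
  have hrank : finrank ℝ (E n) = n := finrank_euclideanSpace_fin
  have hxv : ∀ i, ⟪x, v i⟫ ≤ 1 := fun i ↦ real_inner_comm x (v i) ▸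
    inner_le_one_of_mem_polarBody_of_mem_closure
      ((isClosed_polarBody L).frontier_subset (hv i).2) (frontier_subset_closure hx.1)
  have huw : ∀ i, ⟪u i, w⟫ ≤ 1 := fun i ↦ real_inner_comm w (u i) ▸
    inner_le_one_of_mem_polarBody_of_mem_closure
      ((isClosed_polarBody K).frontier_subset hw) (frontier_subset_closure (hu i).1)
  have hslack : ∀ i ∈ A, ⟪x, v i⟫ = 1 := by
    rw [hA]
    exact fun i hi ↦ inner_eq_one_of_inner_lt_one hdec hsu hsv huv ha (by rwa [hrank]) hxv huw hi
  refine ⟨?_, ?_, hslack⟩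
  · have h := neg_inv_finrank_smul_mem_convexHull hdec hsu hsv huv ha hxv (S := B)
      fun i hi ↦ hslack i (hA ▸ (huw i).lt_of_ne (by rwa [hB] at hi))
    rwa [hrank] at h
  · have h := neg_inv_finrank_smul_mem_convexHull (decomposition_swap hdec) hsv hsu
      (fun i ↦ real_inner_comm (u i) (v i) ▸ huv i) ha
      (fun i ↦ real_inner_comm w (u i) ▸ huw i) (S := A)
      fun i hi ↦ by
        rw [hA, Set.mem_ofPred_eq, not_lt] at hi
        rw [real_inner_comm]
        exact (huw i).antisymm hi
    rwa [hrank] at h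

/-- Conditions holding at a contact point `x ∈ ∂L ∩ (-n ∂K)` for convex
bodies `K ⊆ L` in John's position. -/
theorem stmt8 (n m : ℕ) (K L : Set (E n)) (hK : IsConvexBody K)
    (hL : IsConvexBody L) (hKL : K ⊆ L)
    (u v : Fin m → E n) (a : Fin m → ℝ) (hJ : IsJohnData K L u v a)
    (x : E n) (hx : x ∈ frontier L ∩ ((-(n : ℝ)) • frontier K))
    (w : E n) (hw : w ∈ frontier (polarBody K))
    (hxw : (inner ℝ x w : ℝ) = -(n : ℝ))
    (A B : Set (Fin m))
    (hA : A = {i | (inner ℝ (u i) w : ℝ) < 1})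
    (hB : B = {i | (inner ℝ (u i) w : ℝ) = 1}) :
    (-(1 / (n : ℝ))) • x ∈ convexHull ℝ (u '' B) ∧
    (-(1 / (n : ℝ))) • w ∈ convexHull ℝ (v '' A) ∧
    (∀ i ∈ A, (inner ℝ x (v i) : ℝ) = 1) :=
  stmt8_general n m K L u v a hJ x hx w hw hxw A B hA hB
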